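/- Let β₁, β₂ be real numbers with β₂ > 0, and let λ be a real number with 0 < λ < 1. Then ∫_λ^1 x^{−(β₁+β₂−1/2)} (1−x)^{β₂−1} (x−λ)^{β₂−1} dx = (1−λ)^{2β₂−1} · Γ(β₂)² / Γ(2β₂) · ₂F₁(β₁+β₂−1/2, β₂; 2β₂; 1−λ). (This evaluates the period integral of dx/y over the line segment [λ, 1] for the superelliptic curve y^{2r} = x^{p+q−r}(x−1)^{2r−p}(x−λ)^{2r−p} with β₁ = q/(2r), β₂ = p/(2r), up to a constant phase.) -/

import Mathlib

/-!
Substituting `x = 1 - z t` with `z = 1 - λ` turns the integral into `z^(2β₂-1)` times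
Euler's integral `∫₀¹ (1 - z t)^(-a) t^(b-1) (1 - t)^(c-b-1) dt`
with `a = β₁ + β₂ - 1/2`, `b = β₂`, `c = 2b`.
Expanding `(1 - z t)^(-a)` by the binomial series and integrating term by term gives
`∑ (a)ₙ/n! zⁿ B(n + b, c - b)`, and `B(n + b, c - b) = (b)ₙ/(c)ₙ · B(b, c - b)`
produces `₂F₁`.
The interchange is justified by absolute convergence, since `(b)ₙ ≤ (c)ₙ`.
-/

open MeasureTheory

/-- Pochhammer symbol `(x)_n` in `ℝ`. -/
noncomputable def rpoch (x : ℝ) (n : ℕ) : ℝ := (ascPochhammer ℝ n).eval x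

/-- Gauss' hypergeometric series `₂F₁` (real). -/
noncomputable def hyp2F1 (a b c z : ℝ) : ℝ :=
  ∑' n : ℕ, rpoch a n * rpoch b n / (rpoch c n * (n.factorial : ℝ)) * z ^ n

open Set Real

lemma rpoch_succ (x : ℝ) (n : ℕ) : rpoch x (n + 1) = rpoch x n * (x + n) := by
  simp [rpoch, ascPochhammer_succ_right]

lemma rpoch_pos {x : ℝ} (hx : 0 < x) (n : ℕ) : 0 < rpoch x n := by
  simpa [rpoch] using ascPochhammer_pos n x hx

lemma rpoch_le_rpoch {x y : ℝ} (hx : 0 < x) (hxy : x ≤ y) (n : ℕ) :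
    rpoch x n ≤ rpoch y n := by
  induction n with
  | zero => simp [rpoch]
  | succ n ih =>
    rw [rpoch_succ, rpoch_succ]
    exact mul_le_mul ih (by linarith) (by positivity) ((rpoch_pos hx n).le.trans ih)

lemma Real.Gamma_add_nat_eq_rpoch_mul {x : ℝ} (hx : 0 < x) (n : ℕ) :
    Gamma (x + n) = rpoch x n * Gamma x := by
  induction n with
  | zero => simp [rpoch]
  | succ n ih =>
    rw [Nat.cast_succ, ← add_assoc, Gamma_add_one (by positivity), ih, rpoch_succ]
    ring

lemma ofReal_rpow_mul_one_sub_rpow {u v t : ℝ} (ht : t ∈ Ioo (0 : ℝ) 1) :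
    (t : ℂ) ^ ((u : ℂ) - 1) * (1 - (t : ℂ)) ^ ((v : ℂ) - 1)
      = ((t ^ (u - 1) * (1 - t) ^ (v - 1) : ℝ) : ℂ) := by
  rw [Complex.ofReal_mul, Complex.ofReal_cpow ht.1.le, Complex.ofReal_cpow (by linarith [ht.2])]
  push_cast
  ring

lemma integrableOn_rpow_mul_one_sub_rpow {u v : ℝ} (hu : 0 < u) (hv : 0 < v) :
    IntegrableOn (fun t : ℝ => t ^ (u - 1) * (1 - t) ^ (v - 1)) (Ioo 0 1) := by
  have hc := Complex.betaIntegral_convergent (u := u) (v := v) (by simpa) (by simpa)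
  have hc' := ((intervalIntegrable_iff_integrableOn_Ioc_of_le zero_le_one).mp hc).mono_set
    Ioo_subset_Ioc_self
  refine hc'.re.congr ?_
  filter_upwards [ae_restrict_mem measurableSet_Ioo] with t ht
  simp [ofReal_rpow_mul_one_sub_rpow ht]

lemma integral_rpow_mul_one_sub_rpow {u v : ℝ} (hu : 0 < u) (hv : 0 < v) :
    ∫ t in Ioo (0 : ℝ) 1, t ^ (u - 1) * (1 - t) ^ (v - 1)
      = Gamma u * Gamma v / Gamma (u + v) := by
  have hbeta : Complex.betaIntegral u v
      = ((∫ t in Ioo (0 : ℝ) 1, t ^ (u - 1) * (1 - t) ^ (v - 1) : ℝ) : ℂ) := by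
    rw [Complex.betaIntegral, intervalIntegral.integral_of_le zero_le_one,
      integral_Ioc_eq_integral_Ioo, ← integral_complex_ofReal]
    exact setIntegral_congr_fun measurableSet_Ioo fun t ht => ofReal_rpow_mul_one_sub_rpow ht
  have key := Complex.Gamma_mul_Gamma_eq_betaIntegral (s := u) (t := v) (by simpa) (by simpa)
  rw [hbeta, ← Complex.ofReal_add, Complex.Gamma_ofReal, Complex.Gamma_ofReal,
    Complex.Gamma_ofReal] at key
  rw [eq_div_iff (Gamma_pos_of_pos (by linarith)).ne']
  exact_mod_cast (key.trans (mul_comm _ _)).symm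

lemma Ring.choose_add_nat_sub_one_eq_rpoch_div (a : ℝ) (n : ℕ) :
    Ring.choose (a + n - 1) n = rpoch a n / n.factorial := by
  rw [← Ring.multichoose_eq, eq_div_iff (by positivity), mul_comm, ← nsmul_eq_mul,
    Ring.factorial_nsmul_multichoose_eq_ascPochhammer,
    Polynomial.ascPochhammer_smeval_eq_eval, rpoch]

lemma hasSum_rpoch_div_factorial_mul_pow (a : ℝ) {w : ℝ} (hw : |w| < 1) :
    HasSum (fun n : ℕ => rpoch a n / n.factorial * w ^ n) ((1 - w) ^ (-a)) := by
  have hw' : w ∈ Metric.eball (0 : ℝ) 1 := by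
    simpa [enorm_eq_nnnorm, ← NNReal.coe_lt_coe] using hw
  have := (Real.one_div_one_sub_rpow_hasFPowerSeriesOnBall_zero a).hasSum hw'
  simpa [FormalMultilinearSeries.ofScalars_apply_eq, Ring.choose_add_nat_sub_one_eq_rpoch_div,
    mul_comm, rpow_neg (by linarith [abs_lt.mp hw] : (0:ℝ) ≤ 1 - w)] using this

lemma summable_abs_rpoch_div_factorial_mul_pow (a : ℝ) {w : ℝ} (hw : |w| < 1) :
    Summable (fun n : ℕ => |rpoch a n| / n.factorial * |w| ^ n) := by
  have H := Real.one_div_one_sub_rpow_hasFPowerSeriesOnBall_zero a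
  have hw' : w ∈ Metric.eball (0 : ℝ) (FormalMultilinearSeries.ofScalars ℝ
      fun n ↦ Ring.choose (a + n - 1) n).radius :=
    Metric.eball_subset_eball H.r_le (by simpa [enorm_eq_nnnorm, ← NNReal.coe_lt_coe] using hw)
  simpa [FormalMultilinearSeries.ofScalars_apply_eq, Ring.choose_add_nat_sub_one_eq_rpoch_div,
    abs_div, mul_comm] using FormalMultilinearSeries.summable_norm_apply _ hw'

lemma integral_rpow_add_nat_mul_one_sub_rpow {b c : ℝ} (hb : 0 < b) (hbc : b < c) (n : ℕ) :
    ∫ t in Ioo (0 : ℝ) 1, t ^ (n + b - 1) * (1 - t) ^ (c - b - 1)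
      = rpoch b n / rpoch c n * (Gamma b * Gamma (c - b) / Gamma c) := by
  rw [integral_rpow_mul_one_sub_rpow (by positivity) (by linarith),
    show (n : ℝ) + b + (c - b) = c + n by ring, add_comm (n : ℝ) b,
    Gamma_add_nat_eq_rpoch_mul hb, Gamma_add_nat_eq_rpoch_mul (hb.trans hbc)]
  have := (rpoch_pos (hb.trans hbc) n).ne'
  have := (Gamma_pos_of_pos (hb.trans hbc)).ne'
  field_simp

theorem integral_euler_eq_hyp2F1 (a : ℝ) {b c z : ℝ} (hb : 0 < b) (hbc : b < c)
    (hz : |z| < 1) :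
    ∫ t in Ioo (0 : ℝ) 1, (1 - z * t) ^ (-a) * (t ^ (b - 1) * (1 - t) ^ (c - b - 1))
      = Gamma b * Gamma (c - b) / Gamma c * hyp2F1 a b c z := by
  set B := Gamma b * Gamma (c - b) / Gamma c with hB
  set F : ℕ → ℝ → ℝ := fun n t =>
    rpoch a n / n.factorial * z ^ n * (t ^ (n + b - 1) * (1 - t) ^ (c - b - 1)) with hF
  have hF_hasSum : ∀ t ∈ Ioo (0 : ℝ) 1,
      HasSum (F · t) ((1 - z * t) ^ (-a) * (t ^ (b - 1) * (1 - t) ^ (c - b - 1))) := by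
    intro t ht
    have hzt : |z * t| < 1 := by
      rw [abs_mul, abs_of_pos ht.1]
      nlinarith [abs_nonneg z, ht.2]
    have hterm : ∀ n : ℕ, F n t = rpoch a n / n.factorial * (z * t) ^ n
        * (t ^ (b - 1) * (1 - t) ^ (c - b - 1)) := fun n => by
      simp only [hF]
      rw [show (n : ℝ) + b - 1 = n + (b - 1) by ring, rpow_add ht.1, rpow_natCast, mul_pow]
      ring
    simpa only [hterm] using (hasSum_rpoch_div_factorial_mul_pow a hzt).mul_right _
  have hF_int : ∀ n, IntegrableOn (F n) (Ioo 0 1) := fun n =>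
    (integrableOn_rpow_mul_one_sub_rpow (by positivity) (by linarith)).const_mul _
  have hF_norm : ∀ n, ∫ t in Ioo (0 : ℝ) 1, ‖F n t‖
      = |rpoch a n| / n.factorial * |z| ^ n * (rpoch b n / rpoch c n * B) := by
    intro n
    rw [← integral_rpow_add_nat_mul_one_sub_rpow hb hbc, ← integral_const_mul]
    refine setIntegral_congr_fun measurableSet_Ioo fun t ht => ?_
    have hkernel : 0 ≤ t ^ (n + b - 1) * (1 - t) ^ (c - b - 1) :=
      mul_nonneg (rpow_nonneg ht.1.le _) (rpow_nonneg (by linarith [ht.2]) _)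
    rw [hF, norm_mul, norm_of_nonneg hkernel]
    simp
  have hsum : Summable fun n => ∫ t in Ioo (0 : ℝ) 1, ‖F n t‖ := by
    refine ((summable_abs_rpoch_div_factorial_mul_pow a hz).mul_right B).of_nonneg_of_le
      (fun n => integral_nonneg fun _ => norm_nonneg _) fun n => ?_
    have hB : 0 ≤ B := by
      have := Gamma_pos_of_pos hb
      have := Gamma_pos_of_pos (sub_pos.2 hbc)
      have := Gamma_pos_of_pos (hb.trans hbc)
      positivity
    rw [hF_norm]
    gcongr
    exact mul_le_of_le_one_left hB
      (div_le_one_of_le₀ (rpoch_le_rpoch hb hbc.le n) (rpoch_pos (hb.trans hbc) n).le)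
  calc ∫ t in Ioo (0 : ℝ) 1, (1 - z * t) ^ (-a) * (t ^ (b - 1) * (1 - t) ^ (c - b - 1))
      = ∫ t in Ioo (0 : ℝ) 1, ∑' n, F n t :=
        setIntegral_congr_fun measurableSet_Ioo fun t ht => (hF_hasSum t ht).tsum_eq.symm
    _ = ∑' n, ∫ t in Ioo (0 : ℝ) 1, F n t :=
        (integral_tsum_of_summable_integral_norm hF_int hsum).symm
    _ = ∑' n, B * (rpoch a n * rpoch b n / (rpoch c n * n.factorial) * z ^ n) := by
        refine tsum_congr fun n => ?_
        rw [hF, integral_const_mul, integral_rpow_add_nat_mul_one_sub_rpow hb hbc, ← hB]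
        have := (rpoch_pos (hb.trans hbc) n).ne'
        field_simp
    _ = B * hyp2F1 a b c z := tsum_mul_left

lemma setIntegral_Ioo_one_sub_eq_mul {f : ℝ → ℝ} {z : ℝ} (hz : 0 < z) :
    ∫ x in Ioo (1 - z) 1, f x = z * ∫ t in Ioo (0 : ℝ) 1, f (1 - z * t) := by
  rw [← integral_Ioc_eq_integral_Ioo, ← integral_Ioc_eq_integral_Ioo,
    ← intervalIntegral.integral_of_le (by linarith),
    ← intervalIntegral.integral_of_le zero_le_one,
    intervalIntegral.integral_comp_sub_mul f hz.ne', smul_eq_mul, mul_one, mul_zero, sub_zero,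
    mul_inv_cancel_left₀ hz.ne']

/-- Period integral over `[λ, 1]` of `dx/y` for the superelliptic curve
`y^{2r} = x^{p+q−r}(x−1)^{2r−p}(x−λ)^{2r−p}` (up to a constant phase). -/
theorem statement9 (β₁ β₂ lam : ℝ) (hβ₂ : 0 < β₂)
    (hl0 : 0 < lam) (hl1 : lam < 1) :
    ∫ x in Set.Ioo lam 1,
        x ^ (-(β₁ + β₂ - 1 / 2)) * (1 - x) ^ (β₂ - 1) * (x - lam) ^ (β₂ - 1) =
      (1 - lam) ^ (2 * β₂ - 1) *
        (Real.Gamma β₂ ^ (2 : ℕ) / Real.Gamma (2 * β₂)) *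
        hyp2F1 (β₁ + β₂ - 1 / 2) β₂ (2 * β₂) (1 - lam) := by
  set a := β₁ + β₂ - 1 / 2
  set b := β₂
  set z := 1 - lam
  have hz : 0 < z := by linarith
  have hz1 : |z| < 1 := by rw [abs_of_pos hz]; linarith
  have hlam : lam = 1 - z := by ring
  have hpull : ∀ t ∈ Ioo (0 : ℝ) 1,
      (1 - z * t) ^ (-a) * (1 - (1 - z * t)) ^ (b - 1) * (1 - z * t - lam) ^ (b - 1)
        = z ^ (2 * b - 2) *
            ((1 - z * t) ^ (-a) * (t ^ (b - 1) * (1 - t) ^ (2 * b - b - 1))) := by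
    intro t ht
    rw [show 1 - (1 - z * t) = z * t by ring, show 1 - z * t - lam = z * (1 - t) by ring,
      mul_rpow hz.le ht.1.le, mul_rpow hz.le (by linarith [ht.2]),
      show 2 * b - 2 = (b - 1) + (b - 1) by ring, show 2 * b - b - 1 = b - 1 by ring,
      rpow_add hz]
    ring
  rw [hlam, setIntegral_Ioo_one_sub_eq_mul hz, ← hlam,
    setIntegral_congr_fun measurableSet_Ioo hpull, integral_const_mul,
    integral_euler_eq_hyp2F1 a hβ₂ (by linarith) hz1, show 2 * b - b = b by ring,
    show 2 * b - 1 = 1 + (2 * b - 2) by ring, rpow_add hz, rpow_one]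
  ring
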